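/- arXiv:2308.02742 — 5 statements merged into one kernel-verified Lean document; each statement's English description precedes it below -/
import Mathlib

section
/- Let a, b, d, k, m be integers with a² − d·b² = k, gcd(a,b) = 1, and k dividing a + b·m. Then k divides (m² − d)·b², and in fact k divides m² − d. -/
theorem chakravala_div_m_sq_sub_d (a b d k m : ℤ)
    (hk : a ^ 2 - d * b ^ 2 = k) (hcop : Int.gcd a b = 1)
    (hdvd : k ∣ a + b * m) :
    k ∣ (m ^ 2 - d) * b ^ 2 ∧ k ∣ m ^ 2 - d := by
  have h1 : k ∣ (m ^ 2 - d) * b ^ 2 := by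
    obtain ⟨c, hc⟩ := hdvd
    exact ⟨1 - c * (a - b * m), by linear_combination (b*m - a) * hc + hk⟩
  refine ⟨h1, ?_⟩
  have hab : IsCoprime a b := Int.isCoprime_iff_gcd_eq_one.mpr hcop
  have hkb : IsCoprime k b := by
    have := ((hab.pow_left).add_mul_right_left (-d * b) : IsCoprime (a ^ 2 + -d * b * b) b)
    rw [show a ^ 2 + -d * b * b = k by linarith [sq b]; ] at this
    · exact this
  exact (hkb.pow_right).dvd_of_dvd_mul_right h1
end

section
/- Let a, b, d, k, m be integers with a² − d·b² = k, gcd(a,b) = 1, and k dividing a + b·m. Then k divides a·m + d·b. -/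
theorem chakravala_div_am_add_db (a b d k m : ℤ)
    (hk : a ^ 2 - d * b ^ 2 = k) (hcop : Int.gcd a b = 1)
    (hdvd : k ∣ a + b * m) :
    k ∣ a * m + d * b := by
  have hab : IsCoprime a b := Int.isCoprime_iff_gcd_eq_one.mpr hcop
  have hkb : IsCoprime k b := by
    have h2 : IsCoprime (a ^ 2) b := hab.pow_left
    have : k = a ^ 2 + b * (-(d * b)) := by ring_nf; linarith [hk]
    rw [this]
    exact h2.add_mul_left_left _
  have hmul : k ∣ b * (a * m + d * b) := by
    have : b * (a * m + d * b) = a * (a + b * m) - (a ^ 2 - d * b ^ 2) := by ring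
    rw [this, hk]
    exact dvd_sub (hdvd.mul_left a) dvd_rfl
  exact (hkb.dvd_of_dvd_mul_left) hmul
end

section
/- Let a, b, d, k, m, l be integers with a² − d·b² = k, gcd(a,b) = 1, and k dividing a·l + b·m. Then k divides m² − d·l². -/
/-!
Multiplying `m² - d l²` by `b²` gives `(a² - d b²) l² - (a l + b m)(a l - b m)`, which is divisible
by `k = a² - d b²` whenever `k ∣ a l + b m`. Since `a` and `b` are coprime, so are `k` and `b²`,
and the factor `b²` can be cancelled.
-/

section CommRing

variable {R : Type*} [CommRing R]

theorem sub_mul_sq_mul_sq_eq (a b d m l : R) :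
    (m ^ 2 - d * l ^ 2) * b ^ 2 = (a ^ 2 - d * b ^ 2) * l ^ 2 - (a * l + b * m) * (a * l - b * m) := by
  ring

theorem IsCoprime.sq_sub_mul_sq_sq {a b : R} (h : IsCoprime a b) (d : R) :
    IsCoprime (a ^ 2 - d * b ^ 2) (b ^ 2) := by
  have hb : IsCoprime (a ^ 2 + b * (-d * b)) b := h.pow_left.add_mul_left_left _
  rw [show a ^ 2 + b * (-d * b) = a ^ 2 - d * b ^ 2 by ring] at hb
  exact hb.pow_right

theorem IsCoprime.sq_sub_mul_sq_dvd {a b : R} (h : IsCoprime a b) {d m l : R}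
    (hdvd : a ^ 2 - d * b ^ 2 ∣ a * l + b * m) : a ^ 2 - d * b ^ 2 ∣ m ^ 2 - d * l ^ 2 := by
  have hmul : a ^ 2 - d * b ^ 2 ∣ (m ^ 2 - d * l ^ 2) * b ^ 2 := by
    rw [sub_mul_sq_mul_sq_eq a]
    exact dvd_sub (dvd_mul_right _ _) (hdvd.mul_right _)
  exact (h.sq_sub_mul_sq_sq d).dvd_of_dvd_mul_right hmul

end CommRing

theorem gen_chakravala_div (a b d k m l : ℤ)
    (hk : a ^ 2 - d * b ^ 2 = k) (hcop : Int.gcd a b = 1)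
    (hdvd : k ∣ a * l + b * m) :
    k ∣ m ^ 2 - d * l ^ 2 := by
  subst hk
  exact (Int.isCoprime_iff_gcd_eq_one.mpr hcop).sq_sub_mul_sq_dvd hdvd
end

section
/- Let a, b, d, k, m, l be integers with a² − d·b² = k ≠ 0, gcd(a,b) = 1, k dividing a·l + b·m, ã = (a·m + d·b·l)/k and b̃ = (a·l + b·m)/k. Then ã² − d·b̃² = (m² − d·l²)/k, and all three quotients are integers. -/
theorem gen_chakravala_scaled (a b d k m l : ℤ)
    (hk : a ^ 2 - d * b ^ 2 = k) (hk0 : k ≠ 0)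
    (hcop : Int.gcd a b = 1) (hdvd : k ∣ a * l + b * m) :
    k ∣ a * m + d * b * l ∧ k ∣ m ^ 2 - d * l ^ 2 ∧
      ((a * m + d * b * l) / k) ^ 2 - d * ((a * l + b * m) / k) ^ 2 =
        (m ^ 2 - d * l ^ 2) / k := by
  have hab : IsCoprime a b := Int.isCoprime_iff_gcd_eq_one.mpr hcop
  have hkb : IsCoprime k b := by
    have h0 : IsCoprime (a ^ 2) b := hab.pow_left
    have h1 : IsCoprime (a ^ 2 + b * (-(d * b))) b := h0.add_mul_left_left _
    have e : a ^ 2 + b * (-(d * b)) = k := by linarith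
    rwa [e] at h1
  obtain ⟨x, hx⟩ := hdvd
  -- k ∣ a*m + d*b*l
  have h1 : k ∣ b * (a * m + d * b * l) := ⟨a * x - l, by linear_combination a * hx - l * hk⟩
  have hd1 : k ∣ a * m + d * b * l := hkb.dvd_of_dvd_mul_left h1
  -- k ∣ m² - d l²
  have h2 : k ∣ b ^ 2 * (m ^ 2 - d * l ^ 2) :=
    ⟨x * (b * m - a * l) + l ^ 2, by linear_combination (b * m - a * l) * hx + l ^ 2 * hk⟩
  have hd2 : k ∣ m ^ 2 - d * l ^ 2 :=
    (hkb.pow_right (n := 2)).dvd_of_dvd_mul_left h2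
  refine ⟨hd1, hd2, ?_⟩
  obtain ⟨y, hy⟩ := hd1
  obtain ⟨z, hz⟩ := hd2
  rw [hx, hy, hz, Int.mul_ediv_cancel_left _ hk0, Int.mul_ediv_cancel_left _ hk0,
    Int.mul_ediv_cancel_left _ hk0]
  have hk2 : k ^ 2 ≠ 0 := pow_ne_zero _ hk0
  apply mul_left_cancel₀ hk2
  linear_combination (-(a * m + d * b * l) - k * y) * hy + d * ((a * l + b * m) + k * x) * hx + k * hz + (m ^ 2 - d * l ^ 2) * hk
end

section
/- Let d be a positive non-square integer and let a, b, k, M, l, m, r be integers with a² − d·b² = k ≠ 0, gcd(a,b) = 1, 0 ≤ M < |k|, b·M ≡ −a (mod |k|), l > 0, m = M·l + r·|k|, and suppose (m, l) minimizes |m' − √d·l'| over all positive integer pairs (m', l') with l' ≤ L and k | (a·l' + b·m'). Then gcd(l, r) = 1. -/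
/-!
If `n = gcd(l, r) > 1`, then `(m/n, l/n)` is again admissible: `m/n = M·(l/n) + (r/n)·|k|`, and
`b·M ≡ -a (mod |k|)` alone makes any pair of that shape satisfy `k ∣ a·l' + b·m'`. Its distance
`|m/n - √d·l/n|` is the original one divided by `n`, and that distance is nonzero because `√d` is
irrational, so `(m, l)` was not minimal.
-/

theorem dvd_mul_add_mul_of_modEq {a b M n : ℤ} (h : b * M ≡ -a [ZMOD n]) (l r : ℤ) :
    n ∣ a * l + b * (M * l + r * n) := by
  obtain ⟨c, hc⟩ := h.dvd
  exact ⟨b * r - c * l, by linear_combination -l * hc⟩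

theorem Irrational.intCast_sub_mul_intCast_ne_zero {x : ℝ} (hx : Irrational x) (m : ℤ) {l : ℤ}
    (hl : l ≠ 0) : (m : ℝ) - x * l ≠ 0 :=
  sub_ne_zero.mpr ((hx.mul_intCast hl).ne_int m).symm

theorem abs_intCast_sub_mul_intCast_mul (x : ℝ) (n m l : ℤ) (hn : 0 ≤ n) :
    |((n * m : ℤ) : ℝ) - x * (n * l : ℤ)| = n * |(m : ℝ) - x * l| := by
  push_cast
  rw [show (n : ℝ) * m - x * (n * l) = n * (m - x * l) by ring, abs_mul,
    abs_of_nonneg (by exact_mod_cast hn)]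

theorem gen_chakravala_l_r_coprime_general (d L a b k M l m r : ℤ)
    (hd : 0 < d) (hdns : ¬ IsSquare d)
    (hM : b * M ≡ -a [ZMOD |k|])
    (hl : 0 < l) (hlL : l ≤ L) (hm : m = M * l + r * |k|)
    (hmpos : 0 < m)
    (hmin : ∀ m' l' : ℤ, 0 < m' → 0 < l' → l' ≤ L → k ∣ a * l' + b * m' →
      |(m : ℝ) - Real.sqrt d * l| ≤ |(m' : ℝ) - Real.sqrt d * l'|) :
    Int.gcd l r = 1 := by
  by_contra hne
  set n : ℤ := (Int.gcd l r : ℤ)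
  have hn : 1 < n := by
    have : l.gcd r ≠ 0 := fun h => by rw [Int.gcd_eq_zero_iff] at h; omega
    omega
  have hnl : n ∣ l := Int.gcd_dvd_left l r
  have hnr : n ∣ r := Int.gcd_dvd_right l r
  clear_value n
  obtain ⟨l', rfl⟩ := hnl
  obtain ⟨r', rfl⟩ := hnr
  set m' := M * l' + r' * |k|
  have hmm' : m = n * m' := by rw [hm]; ring
  subst hmm'
  have hl' : 0 < l' := pos_of_mul_pos_right hl (by omega)
  have hdvd' : k ∣ a * l' + b * m' := (abs_dvd k _).mp (dvd_mul_add_mul_of_modEq hM l' r')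
  have hle := hmin m' l' (pos_of_mul_pos_right hmpos (by omega)) hl' (by nlinarith) hdvd'
  have hirr : Irrational √(d : ℝ) := (irrational_sqrt_intCast_iff_of_nonneg hd.le).mpr hdns
  have hpos : 0 < |(m' : ℝ) - √(d : ℝ) * l'| :=
    abs_pos.mpr (hirr.intCast_sub_mul_intCast_ne_zero m' hl'.ne')
  rw [abs_intCast_sub_mul_intCast_mul _ _ _ _ (by omega)] at hle
  have hnR : (1 : ℝ) < n := mod_cast hn
  nlinarith

theorem gen_chakravala_l_r_coprime (d L a b k M l m r : ℤ)
    (hd : 0 < d) (hdns : ¬ IsSquare d)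
    (hk : a ^ 2 - d * b ^ 2 = k) (hk0 : k ≠ 0)
    (hcop : Int.gcd a b = 1)
    (hM0 : 0 ≤ M) (hMk : M < |k|)
    (hM : b * M ≡ -a [ZMOD |k|])
    (hl : 0 < l) (hlL : l ≤ L) (hm : m = M * l + r * |k|)
    (hmpos : 0 < m) (hdvd : k ∣ a * l + b * m)
    (hmin : ∀ m' l' : ℤ, 0 < m' → 0 < l' → l' ≤ L → k ∣ a * l' + b * m' →
      |(m : ℝ) - Real.sqrt d * l| ≤ |(m' : ℝ) - Real.sqrt d * l'|) :
    Int.gcd l r = 1 :=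
  gen_chakravala_l_r_coprime_general d L a b k M l m r hd hdns hM hl hlL hm hmpos hmin
end
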